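/- Let f be a convex function on the convex hull S of two line segments l₁ and l₂ in ℝ² whose interiors intersect in a point. If f vanishes identically on l₁ ∪ l₂, then f vanishes identically on S. -/

import Mathlib

/-!
Let `c` be a common point of the two open segments. Since `f` is convex and vanishes on
`l₁ ∪ l₂`, the maximum principle gives `f ≤ 0 = f c` on `S`. Because `c` lies in the relative
interior of each segment, a homothety of small negative ratio centred at `c` maps each segment,
hence `S`, into itself. So every `x ∈ S` has a partner `z ∈ S` with `c` strictly between `x`
and `z`; convexity then forces `f c ≤ f x` once `f z ≤ f c`.
-/

open Set AffineMap

lemma Set.MapsTo.convexHull {𝕜 E F : Type*} [Ring 𝕜] [PartialOrder 𝕜] [AddCommGroup E]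
    [AddCommGroup F] [Module 𝕜 E] [Module 𝕜 F] {f : E →ᵃ[𝕜] F} {s : Set E} {t : Set F}
    (h : MapsTo f s t) : MapsTo f (convexHull 𝕜 s) (convexHull 𝕜 t) := by
  rw [mapsTo_iff_image_subset, f.image_convexHull]
  exact convexHull_mono h.image_subset

section Homothety

variable {𝕜 E : Type*} [Field 𝕜] [LinearOrder 𝕜] [IsStrictOrderedRing 𝕜]
  [AddCommGroup E] [Module 𝕜 E]

lemma homothety_neg_left_mem_segment {p q c : E} {a b δ : 𝕜} (ha : 0 < a) (hb : 0 < b)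
    (hab : a + b = 1) (hc : a • p + b • q = c) (hδ₀ : 0 ≤ δ) (hδ : δ ≤ a) :
    homothety c (-δ) p ∈ segment 𝕜 p q := by
  refine ⟨(1 + δ) * a - δ, (1 + δ) * b, ?_, by positivity, by linear_combination (1 + δ) * hab,
    ?_⟩
  · nlinarith
  · rw [homothety_apply, vsub_eq_sub, vadd_eq_add, ← hc]
    module

lemma exists_mapsTo_homothety_neg_segment {p q c : E} (hc : c ∈ openSegment 𝕜 p q) :
    ∃ ε > 0, ∀ δ : 𝕜, 0 ≤ δ → δ ≤ ε →
      MapsTo (homothety c (-δ)) (segment 𝕜 p q) (segment 𝕜 p q) := by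
  obtain ⟨a, b, ha, hb, hab, hc⟩ := hc
  refine ⟨min a b, lt_min ha hb, fun δ hδ₀ hδ ↦ ?_⟩
  rw [mapsTo_iff_image_subset, image_segment]
  refine (convex_segment p q).segment_subset
    (homothety_neg_left_mem_segment ha hb hab hc hδ₀ (hδ.trans (min_le_left a b))) ?_
  rw [segment_symm]
  exact homothety_neg_left_mem_segment hb ha (by rwa [add_comm]) (by rwa [add_comm]) hδ₀
    (hδ.trans (min_le_right a b))

lemma mem_openSegment_homothety_neg (c x : E) {δ : 𝕜} (hδ : 0 < δ) :
    c ∈ openSegment 𝕜 x (homothety c (-δ) x) := by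
  have h₁ : (1 + δ) ≠ 0 := by positivity
  refine ⟨δ / (1 + δ), 1 / (1 + δ), by positivity, by positivity, by field_simp; ring, ?_⟩
  rw [homothety_apply, vsub_eq_sub, vadd_eq_add]
  match_scalars <;> field_simp <;> ring

theorem ConvexOn.eq_of_isMaxOn_of_mapsTo_homothety {β : Type*} [AddCommMonoid β] [LinearOrder β]
    [IsOrderedCancelAddMonoid β] [Module 𝕜 β] [PosSMulStrictMono 𝕜 β] {s : Set E} {f : E → β}
    {c x : E} {δ : 𝕜} (hf : ConvexOn 𝕜 s f) (hmax : IsMaxOn f s c) (hδ : 0 < δ)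
    (hs : MapsTo (homothety c (-δ)) s s) (hx : x ∈ s) : f x = f c :=
  le_antisymm (hmax hx) <|
    hf.le_left_of_right_le hx (hs hx) (mem_openSegment_homothety_neg c x hδ) (hmax (hs hx))

end Homothety

theorem stmt_5 (p₁ q₁ p₂ q₂ : ℝ × ℝ) (f : ℝ × ℝ → ℝ)
    (hmeet : (openSegment ℝ p₁ q₁ ∩ openSegment ℝ p₂ q₂).Nonempty)
    (hf : ConvexOn ℝ (convexHull ℝ (segment ℝ p₁ q₁ ∪ segment ℝ p₂ q₂)) f)
    (h0 : ∀ x ∈ segment ℝ p₁ q₁ ∪ segment ℝ p₂ q₂, f x = 0) :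
    ∀ x ∈ convexHull ℝ (segment ℝ p₁ q₁ ∪ segment ℝ p₂ q₂), f x = 0 := by
  obtain ⟨c, hc₁, hc₂⟩ := hmeet
  obtain ⟨ε₁, hε₁, h₁⟩ := exists_mapsTo_homothety_neg_segment hc₁
  obtain ⟨ε₂, hε₂, h₂⟩ := exists_mapsTo_homothety_neg_segment hc₂
  have hδ : 0 < min ε₁ ε₂ := lt_min hε₁ hε₂
  have hmaps := ((h₁ _ hδ.le (min_le_left _ _)).union_union
    (h₂ _ hδ.le (min_le_right _ _))).convexHull
  have hfc : f c = 0 := h0 c (Or.inl (openSegment_subset_segment _ _ _ hc₁))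
  have hmax : IsMaxOn f (convexHull ℝ (segment ℝ p₁ q₁ ∪ segment ℝ p₂ q₂)) c := fun y hy ↦ by
    obtain ⟨z, hz, hyz⟩ := hf.exists_ge_of_mem_convexHull (subset_convexHull ℝ _) hy
    change f y ≤ f c
    rwa [hfc, ← h0 z hz]
  intro x hx
  rw [hf.eq_of_isMaxOn_of_mapsTo_homothety hmax hδ hmaps hx, hfc]
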